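/- Let n ≥ 20 and let v = (v_1, ..., v_n) be a proper (1/n)-thin sequence in R^2 whose edge sequence is n²-decreasing. Then for every index p with 1 < p < n: (1) β(v_1, v_p, v_n) ≤ Σ_{k=2}^{p} β_k + 0.1·Σ_{k=p+1}^{n-1} β_k, and (2) β(v_1, v_p, v_n) ≥ 0.9·Σ_{k=2}^{p} β_k, where β_k = β(v_{k-1}, v_k, v_{k+1}). -/

import Mathlib

/-!
Identify the plane with `ℂ`, oriented so that a proper sequence turns counterclockwise. The
support lines of the edges force every turn to be positive, so the direction of the `k`-th edge
measured from the `m`-th one is the sum of the turns in between; all of these angles are tiny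
because their total is at most `1 / n`.

The chord from `v 1` to `v p` is the first edge plus later edges whose lengths add up to at most
`1 / (n² - 1)` of it, all pointing in directions between `0` and `S = ∑_{k ≤ p} β_k`. Divided by
the first edge, this sum has real part at least `1 - 1 / (n² - 1)` and imaginary part at most
`S / (n² - 1)`, so its argument `A` satisfies `0 ≤ A ≤ tan A ≤ S / (n² - 2)`. In the same way the
chord from `v p` to `v n` leaves the `p`-th edge at an angle `0 ≤ D ≤ T / (n² - 2)`,
`T = ∑_{k > p} β_k`. Hence `β(v 1, v p, v n) = S + D - A`.
-/

open EuclideanGeometry Real Finset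

noncomputable section

/-- Points of the plane. -/
abbrev Pt : Type := EuclideanSpace ℝ (Fin 2)

/-- `Δ(a,b,c)`: the oriented area of the parallelepiped spanned by `a - b` and `c - b`. -/
def tdet (a b c : Pt) : ℝ :=
  (a 0 - b 0) * (c 1 - b 1) - (a 1 - b 1) * (c 0 - b 0)

/-- `β(a,b,c) = π - ∠(a,b,c)`, where `∠` is the unsigned angle at `b`. -/
def beta (a b c : Pt) : ℝ := Real.pi - EuclideanGeometry.angle a b c

/-- Cyclic successor on `{1, …, n}`. -/
def cyc (n j : ℕ) : ℕ := if j = n then 1 else j + 1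

/-- Cyclic predecessor on `{1, …, n}`. -/
def cycPred (n j : ℕ) : ℕ := if j = 1 then n else j - 1

/-- `(v 1, …, v n)` is a proper sequence: `Δ(v₁,v₂,v₃) > 0` and every segment
`conv{v_j, v_{j+1}}` (indices cyclic) is an edge of the convex hull of the points,
i.e. it is the set of maximizers of some linear functional over the points. -/
def Proper (n : ℕ) (v : ℕ → Pt) : Prop :=
  0 < tdet (v 1) (v 2) (v 3) ∧
  ∀ j, 1 ≤ j → j ≤ n →
    ∃ (ℓ : Pt →ₗ[ℝ] ℝ) (c : ℝ), ℓ (v j) = c ∧ ℓ (v (cyc n j)) = c ∧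
      ∀ k, 1 ≤ k → k ≤ n → k ≠ j → k ≠ cyc n j → ℓ (v k) < c

/-- `(v 1, …, v n)` is `θ`-thin. -/
def Thin (n : ℕ) (v : ℕ → Pt) (θ : ℝ) : Prop :=
  ∑ k ∈ Finset.Icc 2 (n - 1), beta (v (k - 1)) (v k) (v (k + 1)) ≤ θ

/-- The edge sequence of `(v 1, …, v n)` is `h`-decreasing. -/
def EdgeDecr (n : ℕ) (v : ℕ → Pt) (h : ℝ) : Prop :=
  ∀ k, 1 ≤ k → k + 2 ≤ n → h * dist (v (k + 1)) (v (k + 2)) ≤ dist (v k) (v (k + 1))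


theorem tdet_mul_sub_tdet_mul (ℓ : Pt →ₗ[ℝ] ℝ) (a b c d : Pt) :
    tdet a b c * ℓ (d - b) - tdet b c d * ℓ (a - b) = tdet a b d * (ℓ c - ℓ b) := by
  have hℓ : ∀ x : Pt,
      ℓ x = x 0 * ℓ (EuclideanSpace.single 0 1) + x 1 * ℓ (EuclideanSpace.single 1 1) := by
    intro x
    have hx : x = x 0 • EuclideanSpace.single 0 1 + x 1 • EuclideanSpace.single 1 1 := by
      ext i; fin_cases i <;> simp
    conv_lhs => rw [hx]
    rw [map_add, map_smul, map_smul, smul_eq_mul, smul_eq_mul]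
  rw [hℓ (d - b), hℓ (a - b), hℓ c, hℓ b]
  simp only [tdet, PiLp.sub_apply]
  ring

/-- Both neighbours of an edge lie strictly on the same side of its support line, so consecutive
triples have the same orientation. -/
theorem Proper.tdet_pos {n : ℕ} {v : ℕ → Pt} (hv : Proper n v) {k : ℕ} (hk : 2 ≤ k)
    (hkn : k < n) : 0 < tdet (v (k - 1)) (v k) (v (k + 1)) := by
  induction k, hk using Nat.le_induction with
  | base => exact hv.1
  | succ k hk ih =>
    obtain ⟨ℓ, c, hb, hc, hlt⟩ := hv.2 k (by omega) (by omega)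
    have hcyc : cyc n k = k + 1 := if_neg (by omega)
    rw [hcyc] at hc hlt
    have ha : ℓ (v (k - 1) - v k) < 0 := by
      rw [map_sub, hb, sub_neg]; exact hlt _ (by omega) (by omega) (by omega) (by omega)
    have hd : ℓ (v (k + 2) - v k) < 0 := by
      rw [map_sub, hb, sub_neg]; exact hlt _ (by omega) (by omega) (by omega) (by omega)
    have hside := tdet_mul_sub_tdet_mul ℓ (v (k - 1)) (v k) (v (k + 1)) (v (k + 2))
    rw [hb, hc, sub_self, mul_zero, sub_eq_zero] at hside
    rw [Nat.add_sub_cancel]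
    exact pos_of_mul_neg_left (hside ▸ mul_neg_of_pos_of_neg (ih (by omega)) hd) ha.le

/-- The conjugate of the standard identification `![x, y] ↦ x + y i`: with it, `tdet a b c > 0`
means a counterclockwise turn at `b`. -/
def toC : Pt ≃ₗᵢ[ℝ] ℂ := Complex.orthonormalBasisOneI.repr.symm.trans Complex.conjLIE

@[simp] theorem toC_re (x : Pt) : (toC x).re = x 0 := by simp [toC]

@[simp] theorem toC_im (x : Pt) : (toC x).im = -x 1 := by simp [toC]

theorem im_toC_div_pos_of_tdet_pos {a b c : Pt} (h : 0 < tdet a b c) :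
    0 < (toC (c - b) / toC (b - a)).im := by
  have hz : toC (b - a) ≠ 0 := by
    refine (map_ne_zero_iff _ toC.injective).mpr (sub_ne_zero.mpr ?_)
    rintro rfl
    simp [tdet] at h
  rw [Complex.div_im, ← sub_div, div_pos_iff_of_pos_right (Complex.normSq_pos.mpr hz)]
  simp only [toC_re, toC_im, PiLp.sub_apply]
  simp only [tdet] at h
  linarith

theorem beta_eq_angle_toC (a b c : Pt) :
    beta a b c = InnerProductGeometry.angle (toC (b - a)) (toC (c - b)) :=
  calc beta a b c = InnerProductGeometry.angle (b - a) (c - b) := by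
        rw [beta, EuclideanGeometry.angle, vsub_eq_sub, vsub_eq_sub, ← neg_sub b a,
          InnerProductGeometry.angle_neg_left, sub_sub_cancel]
    _ = _ := (toC.toLinearIsometry.angle_map _ _).symm

open Complex

theorem arg_div_eq_angle {z w : ℂ} (h : 0 < (w / z).im) :
    arg (w / z) = InnerProductGeometry.angle z w := by
  have hw : w ≠ 0 := by rintro rfl; simp at h
  have hz : z ≠ 0 := by rintro rfl; simp at h
  rw [InnerProductGeometry.angle_comm, angle_eq_abs_arg hw hz,
    abs_of_nonneg (arg_nonneg_iff.mpr h.le)]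

theorem arg_div_eq_sum_arg_div {z : ℕ → ℂ} {m q : ℕ} (hmq : m ≤ q)
    (hturn : ∀ j, m < j → j ≤ q → 0 < (z j / z (j - 1)).im)
    (hsum : ∑ j ∈ Icc (m + 1) q, arg (z j / z (j - 1)) < π) :
    arg (z q / z m) = ∑ j ∈ Icc (m + 1) q, arg (z j / z (j - 1)) := by
  induction q, hmq using Nat.le_induction with
  | base => simp
  | succ q hmq ih =>
    have hlast := hturn (q + 1) (by omega) le_rfl
    have hfirst := hturn (m + 1) (by omega) (by omega)
    rw [sum_Icc_succ_top (by omega)] at hsum ⊢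
    simp only [Nat.add_sub_cancel] at hsum hlast hfirst ⊢
    have hprev : 0 ≤ ∑ j ∈ Icc (m + 1) q, arg (z j / z (j - 1)) :=
      sum_nonneg fun j hj => arg_nonneg_iff.mpr
        (hturn j (by simp at hj; omega) (by simp at hj; omega)).le
    have hlast_nonneg := arg_nonneg_iff.mpr hlast.le
    have hzq : z q ≠ 0 := by rintro h; simp [h] at hlast
    have hzm : z m ≠ 0 := by rintro h; simp [h] at hfirst
    have hy : z (q + 1) / z q ≠ 0 := by rintro h; simp [h] at hlast
    have hq := ih (fun j hj hjq => hturn j hj (by omega)) (by linarith)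
    rw [← div_mul_div_cancel₀ (a := z (q + 1)) hzq, mul_comm, arg_mul (div_ne_zero hzq hzm) hy, hq]
    constructor <;> linarith [pi_pos]

theorem one_sub_le_re_one_add_sum (s : Finset ℕ) (ζ : ℕ → ℂ) :
    1 - ∑ k ∈ s, ‖ζ k‖ ≤ (1 + ∑ k ∈ s, ζ k).re := by
  rw [add_re, one_re, re_sum, sub_eq_add_neg, ← sum_neg_distrib]
  gcongr with k
  exact neg_le_of_abs_le (abs_re_le_norm _)

theorem arg_one_add_sum_mem_Icc {s : Finset ℕ} {ζ : ℕ → ℂ} {θ ε : ℝ} (hθ : 0 ≤ θ)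
    (harg : ∀ k ∈ s, arg (ζ k) ∈ Set.Icc 0 θ) (hε : ∑ k ∈ s, ‖ζ k‖ ≤ ε) (hε1 : ε < 1) :
    arg (1 + ∑ k ∈ s, ζ k) ∈ Set.Icc 0 (θ * ε / (1 - ε)) := by
  set x := 1 + ∑ k ∈ s, ζ k
  have hε0 : 0 ≤ ε := (sum_nonneg fun k _ => norm_nonneg (ζ k)).trans hε
  have hre : 1 - ε ≤ x.re := (one_sub_le_re_one_add_sum s ζ).trans' (by linarith)
  have him : x.im = ∑ k ∈ s, ‖ζ k‖ * Real.sin (arg (ζ k)) := by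
    simp only [x, add_im, one_im, im_sum, zero_add, norm_mul_sin_arg]
  have him_nonneg : 0 ≤ x.im := by
    rw [him]
    exact sum_nonneg fun k hk =>
      mul_nonneg (norm_nonneg _) (sin_nonneg_of_nonneg_of_le_pi (harg k hk).1 (arg_le_pi _))
  have him_le : x.im ≤ θ * ε := by
    rw [him, mul_comm θ]
    calc ∑ k ∈ s, ‖ζ k‖ * Real.sin (arg (ζ k)) ≤ ∑ k ∈ s, ‖ζ k‖ * θ := by
          gcongr with k hk
          exact (sin_le (harg k hk).1).trans (harg k hk).2
      _ = (∑ k ∈ s, ‖ζ k‖) * θ := (sum_mul ..).symm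
      _ ≤ ε * θ := by gcongr
  have harg_nonneg : 0 ≤ arg x := arg_nonneg_iff.mpr him_nonneg
  have harg_lt : arg x < π / 2 :=
    (abs_lt.mp (abs_arg_lt_pi_div_two_iff.mpr (Or.inl (by linarith)))).2
  refine ⟨harg_nonneg, ?_⟩
  calc arg x ≤ Real.tan (arg x) := le_tan harg_nonneg harg_lt
    _ = x.im / x.re := tan_arg x
    _ ≤ θ * ε / (1 - ε) := div_le_div₀ (mul_nonneg hθ hε0) him_le (by linarith) hre

theorem sum_Ico_le_div_sub_one {a : ℕ → ℝ} {h : ℝ} (hh : 1 < h) (ha : ∀ k, 0 ≤ a k) {m q : ℕ}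
    (hdec : ∀ k, m ≤ k → k + 1 < q → h * a (k + 1) ≤ a k) :
    ∑ k ∈ Ico (m + 1) q, a k ≤ a m / (h - 1) := by
  have hh' : 0 < h - 1 := by linarith
  have key : ∀ r, m ≤ r → r < q →
      ∑ k ∈ Ico (m + 1) (r + 1), a k + a r / (h - 1) ≤ a m / (h - 1) := by
    intro r hmr
    induction r, hmr using Nat.le_induction with
    | base => simp
    | succ r hmr ih =>
      intro hrq
      rw [sum_Ico_succ_top (by omega)]
      have hstep : a (r + 1) + a (r + 1) / (h - 1) ≤ a r / (h - 1) :=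
        calc a (r + 1) + a (r + 1) / (h - 1) = h * a (r + 1) / (h - 1) := by field_simp; ring
          _ ≤ a r / (h - 1) := by gcongr; exact hdec r hmr (by omega)
      linarith [ih (by omega)]
  rcases Nat.lt_or_ge m (q - 1) with hlt | hle
  · have := key (q - 1) hlt.le (by omega)
    rw [Nat.sub_add_cancel (by omega)] at this
    linarith [div_nonneg (ha (q - 1)) hh'.le]
  · rw [Ico_eq_empty (by omega), sum_empty]
    exact div_nonneg (ha m) hh'.le

theorem sum_ne_zero_and_arg_sum_div_mem_Icc {z : ℕ → ℂ} {m q : ℕ} {θ h : ℝ} (hmq : m < q)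
    (hz : z m ≠ 0) (hθ : 0 ≤ θ) (hh : 2 < h)
    (harg : ∀ k ∈ Ico (m + 1) q, arg (z k / z m) ∈ Set.Icc 0 θ)
    (hdec : ∀ k, m ≤ k → k + 1 < q → h * ‖z (k + 1)‖ ≤ ‖z k‖) :
    ∑ k ∈ Ico m q, z k ≠ 0 ∧ arg ((∑ k ∈ Ico m q, z k) / z m) ∈ Set.Icc 0 (θ / (h - 2)) := by
  have hsplit : (∑ k ∈ Ico m q, z k) / z m = 1 + ∑ k ∈ Ico (m + 1) q, z k / z m := by
    rw [sum_eq_sum_Ico_succ_bot hmq, add_div, div_self hz, sum_div]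
  have hε : ∑ k ∈ Ico (m + 1) q, ‖z k / z m‖ ≤ 1 / (h - 1) := by
    have hzm := norm_pos_iff.mpr hz
    simp_rw [norm_div]
    calc ∑ k ∈ Ico (m + 1) q, ‖z k‖ / ‖z m‖ = (∑ k ∈ Ico (m + 1) q, ‖z k‖) / ‖z m‖ :=
          (sum_div ..).symm
      _ ≤ ‖z m‖ / (h - 1) / ‖z m‖ := by
          gcongr; exact sum_Ico_le_div_sub_one (by linarith) (fun k => norm_nonneg (z k)) hdec
      _ = 1 / (h - 1) := by field_simp
  have hε1 : 1 / (h - 1) < 1 := by rw [div_lt_one (by linarith)]; linarith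
  have hre := (one_sub_le_re_one_add_sum _ _).trans' (sub_le_sub_left hε 1)
  have hmem := arg_one_add_sum_mem_Icc hθ harg hε hε1
  have hh2 : (h - 1) * (1 - 1 / (h - 1)) = h - 2 := by
    rw [mul_sub, mul_one, mul_one_div_cancel (by linarith)]; ring
  rw [← hsplit, mul_one_div, div_div, hh2] at hmem
  rw [← hsplit] at hre
  refine ⟨fun h0 => ?_, hmem⟩
  rw [h0, zero_div, zero_re] at hre
  linarith

theorem angle_eq_arg_add_arg_sub_arg {a b x y : ℂ} (ha : a ≠ 0) (hb : b ≠ 0) (hx : x ≠ 0)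
    (hy : y ≠ 0) (h0 : 0 ≤ arg (b / a) + arg (y / b) - arg (x / a))
    (hπ : arg (b / a) + arg (y / b) - arg (x / a) ≤ π) :
    InnerProductGeometry.angle x y = arg (b / a) + arg (y / b) - arg (x / a) := by
  have hyx : y / x = b / a * (y / b) / (x / a) := by field_simp
  have hcoe : (arg (y / x) : Real.Angle) =
      ((arg (b / a) + arg (y / b) - arg (x / a) : ℝ) : Real.Angle) := by
    rw [hyx, arg_div_coe_angle (by simp [*]) (by simp [*]),
      arg_mul_coe_angle (by simp [*]) (by simp [*])]
    rfl
  rw [arg_coe_angle_eq_iff_eq_toReal,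
    Real.Angle.toReal_coe_eq_self_iff_mem_Ioc.mpr ⟨by linarith [pi_pos], hπ⟩] at hcoe
  rw [InnerProductGeometry.angle_comm, angle_eq_abs_arg hy hx, hcoe, abs_of_nonneg h0]

/-- The exterior angle `β_k` of the paper. -/
def turn (v : ℕ → Pt) (k : ℕ) : ℝ := beta (v (k - 1)) (v k) (v (k + 1))

def edge (v : ℕ → Pt) (k : ℕ) : ℂ := toC (v (k + 1) - v k)

theorem turn_nonneg (v : ℕ → Pt) (k : ℕ) : 0 ≤ turn v k :=
  sub_nonneg.mpr (EuclideanGeometry.angle_le_pi _ _ _)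

theorem sum_Ico_edge (v : ℕ → Pt) {m q : ℕ} (hmq : m ≤ q) :
    ∑ k ∈ Ico m q, edge v k = toC (v q - v m) := by
  rw [← sum_Ico_sub v hmq, map_sum]; rfl

section Polygon

variable {n : ℕ} {v : ℕ → Pt}

theorem EdgeDecr.mul_norm_edge_le {h : ℝ} (hedge : EdgeDecr n v h) {k : ℕ} (hk : 1 ≤ k)
    (hkn : k + 2 ≤ n) : h * ‖edge v (k + 1)‖ ≤ ‖edge v k‖ := by
  simpa only [edge, LinearIsometryEquiv.norm_map, ← dist_eq_norm, dist_comm] using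
    hedge k hk hkn

theorem Proper.im_edge_div_pos (hv : Proper n v) {k : ℕ} (hk : 2 ≤ k) (hkn : k < n) :
    0 < (edge v k / edge v (k - 1)).im := by
  have := im_toC_div_pos_of_tdet_pos (hv.tdet_pos hk hkn)
  rwa [edge, edge, Nat.sub_add_cancel (by omega)]

theorem Proper.edge_ne_zero (hv : Proper n v) (hn : 3 ≤ n) {k : ℕ} (hk : 1 ≤ k) (hkn : k < n) :
    edge v k ≠ 0 := by
  intro h0
  rcases Nat.lt_or_ge (k + 1) n with hlt | hge
  · have := hv.im_edge_div_pos (k := k + 1) (by omega) hlt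
    simp [h0] at this
  · have := hv.im_edge_div_pos (k := k) (by omega) hkn
    simp [h0] at this

theorem Proper.turn_eq_arg (hv : Proper n v) {k : ℕ} (hk : 2 ≤ k) (hkn : k < n) :
    turn v k = arg (edge v k / edge v (k - 1)) := by
  rw [arg_div_eq_angle (hv.im_edge_div_pos hk hkn), turn, beta_eq_angle_toC, edge, edge,
    Nat.sub_add_cancel (by omega)]

theorem Proper.arg_edge_div_edge (hv : Proper n v)
    (hsmall : ∑ k ∈ Icc 2 (n - 1), turn v k < π) {m q : ℕ} (hm : 1 ≤ m) (hmq : m ≤ q)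
    (hqn : q < n) : arg (edge v q / edge v m) = ∑ k ∈ Icc (m + 1) q, turn v k := by
  have hturn : ∑ k ∈ Icc (m + 1) q, turn v k =
      ∑ k ∈ Icc (m + 1) q, arg (edge v k / edge v (k - 1)) :=
    sum_congr rfl fun k hk => hv.turn_eq_arg (by simp at hk; omega) (by simp at hk; omega)
  have hsub : ∑ k ∈ Icc (m + 1) q, turn v k ≤ ∑ k ∈ Icc 2 (n - 1), turn v k :=
    sum_le_sum_of_subset_of_nonneg (Icc_subset_Icc (by omega) (by omega))
      fun k _ _ => turn_nonneg v k
  rw [hturn] at hsub ⊢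
  exact arg_div_eq_sum_arg_div hmq (fun j hj hjq => hv.im_edge_div_pos (by omega) (by omega))
    (hsub.trans_lt hsmall)

/-- `A` is the angle from the first edge to the chord `v p - v 1`, and `D` the angle from the
`p`-th edge to the chord `v n - v p`. -/
theorem Proper.exists_beta_eq_sum_add_sub (hv : Proper n v)
    (hsmall : ∑ k ∈ Icc 2 (n - 1), turn v k < π) {h : ℝ} (hh : 3 ≤ h) (hedge : EdgeDecr n v h)
    {p : ℕ} (hp1 : 1 < p) (hpn : p < n) :
    ∃ A D, 0 ≤ A ∧ A ≤ (∑ k ∈ Icc 2 p, turn v k) / (h - 2) ∧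
      0 ≤ D ∧ D ≤ (∑ k ∈ Icc (p + 1) (n - 1), turn v k) / (h - 2) ∧
      beta (v 1) (v p) (v n) = ∑ k ∈ Icc 2 p, turn v k + D - A := by
  set S := ∑ k ∈ Icc 2 p, turn v k
  set T := ∑ k ∈ Icc (p + 1) (n - 1), turn v k
  have hmono : ∀ a b a' b', a' ≤ a → b ≤ b' →
      ∑ k ∈ Icc a b, turn v k ≤ ∑ k ∈ Icc a' b', turn v k :=
    fun a b a' b' ha hb => sum_le_sum_of_subset_of_nonneg (Icc_subset_Icc ha hb)
      fun k _ _ => turn_nonneg v k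
  have hST : S + T = ∑ k ∈ Icc 2 (n - 1), turn v k := by
    have hIoc : ∀ a b, Icc (a + 1) b = Ioc a b := Icc_add_one_left_eq_Ioc
    simp only [S, T]
    rw [show Icc 2 p = Ioc 1 p from hIoc 1 p, hIoc p,
      show Icc 2 (n - 1) = Ioc 1 (n - 1) from hIoc 1 (n - 1)]
    exact sum_Ioc_consecutive _ (by omega) (by omega)
  have hS0 : 0 ≤ S := sum_nonneg fun k _ => turn_nonneg v k
  have hT0 : 0 ≤ T := sum_nonneg fun k _ => turn_nonneg v k
  have hz : ∀ k, 1 ≤ k → k < n → edge v k ≠ 0 :=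
    fun k hk hkn => hv.edge_ne_zero (by omega) hk hkn
  obtain ⟨hc₁, hA0, hA⟩ := sum_ne_zero_and_arg_sum_div_mem_Icc (θ := S) hp1
    (hz 1 le_rfl (by omega)) hS0 (by linarith)
    (fun k hk => by
      simp only [mem_Ico] at hk
      rw [hv.arg_edge_div_edge hsmall le_rfl (by omega) (by omega)]
      exact ⟨sum_nonneg fun k _ => turn_nonneg v k, hmono _ _ _ _ le_rfl (by omega)⟩)
    (fun k hk hkp => hedge.mul_norm_edge_le hk (by omega))
  obtain ⟨hc₂, hD0, hD⟩ := sum_ne_zero_and_arg_sum_div_mem_Icc (θ := T) hpn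
    (hz p (by omega) hpn) hT0 (by linarith)
    (fun k hk => by
      simp only [mem_Ico] at hk
      rw [hv.arg_edge_div_edge hsmall (by omega) (by omega) (by omega)]
      exact ⟨sum_nonneg fun k _ => turn_nonneg v k, hmono _ _ _ _ le_rfl (by omega)⟩)
    (fun k hk hkn => hedge.mul_norm_edge_le (by omega) (by omega))
  rw [sum_Ico_edge v hp1.le] at hc₁ hA0 hA
  rw [sum_Ico_edge v hpn.le] at hc₂ hD0 hD
  have hS := hv.arg_edge_div_edge hsmall le_rfl hp1.le hpn
  have hh2 : 1 ≤ h - 2 := by linarith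
  refine ⟨_, _, hA0, hA, hD0, hD, ?_⟩
  rw [beta_eq_angle_toC, angle_eq_arg_add_arg_sub_arg (hz 1 le_rfl (by omega))
    (hz p (by omega) hpn) hc₁ hc₂, hS]
  · linarith [div_le_self hS0 hh2]
  · linarith [div_le_self hT0 hh2]

end Polygon

/-- Estimates (1) and (2) of Lemma 12 of the paper: bounds on `β(v₁, v_p, v_n)`
in terms of the angle sums of a proper `(1/n)`-thin sequence with
`n²`-decreasing edge sequence, for `n ≥ 20`. -/
theorem stmt13 (n : ℕ) (hn : 20 ≤ n) (v : ℕ → Pt) (hv : Proper n v)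
    (hthin : Thin n v (1 / n)) (hedge : EdgeDecr n v ((n : ℝ) ^ 2))
    (p : ℕ) (hp1 : 1 < p) (hpn : p < n) :
    beta (v 1) (v p) (v n) ≤
        (∑ k ∈ Finset.Icc 2 p, beta (v (k - 1)) (v k) (v (k + 1))) +
          0.1 * ∑ k ∈ Finset.Icc (p + 1) (n - 1), beta (v (k - 1)) (v k) (v (k + 1)) ∧
      0.9 * ∑ k ∈ Finset.Icc 2 p, beta (v (k - 1)) (v k) (v (k + 1)) ≤
        beta (v 1) (v p) (v n) := by
  simp only [Thin, ← turn.eq_1] at hthin ⊢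
  have hn' : (20 : ℝ) ≤ n := by exact_mod_cast hn
  have htot : ∑ k ∈ Icc 2 (n - 1), turn v k < π := by
    linarith [one_div_le_one_div_of_le (by norm_num) hn', pi_gt_three]
  obtain ⟨A, D, hA0, hA, hD0, hD, hβ⟩ :=
    hv.exists_beta_eq_sum_add_sub htot (h := (n : ℝ) ^ 2) (by nlinarith) hedge hp1 hpn
  have h10 : (10 : ℝ) ≤ (n : ℝ) ^ 2 - 2 := by nlinarith
  have hS0 : 0 ≤ ∑ k ∈ Icc 2 p, turn v k := sum_nonneg fun k _ => turn_nonneg v k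
  have hT0 : 0 ≤ ∑ k ∈ Icc (p + 1) (n - 1), turn v k := sum_nonneg fun k _ => turn_nonneg v k
  have hA' := hA.trans (div_le_div_of_nonneg_left hS0 (by norm_num) h10)
  have hD' := hD.trans (div_le_div_of_nonneg_left hT0 (by norm_num) h10)
  constructor <;> linarith
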